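/- With $\mathcal{O}(b_1,b_2,\beta)$ defined as the constrained infimum of the quotient $\frac{\int (|\nabla u_1|^2 + |\nabla u_2|^2)}{\frac{b_1}{2}\int|u_1|^4 + \frac{b_2}{2}\int|u_2|^4 + \beta\int|u_1|^2|u_2|^2}$ over $u_1, u_2 \in H^1(\mathbb{R}^2)$ with $\|u_1\|_2 = \|u_2\|_2 = 1$, for any $(b_1,b_2,\beta), (\tilde b_1, \tilde b_2, \tilde\beta) \in (0,\infty)^3$ one has $|\mathcal{O}(b_1,b_2,\beta) - \mathcal{O}(\tilde b_1, \tilde b_2, \tilde\beta)| \le \frac{12 a^*}{(b_1+b_2+2\beta)(\tilde b_1 + \tilde b_2 + 2\tilde\beta)} |(b_1,b_2,\beta) - (\tilde b_1,\tilde b_2,\tilde \beta)|$. In particular $\mathcal{O}$ is locally Lipschitz continuous on $(0,\infty)^3$. -/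

import Mathlib

open MeasureTheory

/-- Squared norm of the gradient of `u` at `x`. -/
noncomputable def gradNormSq (u : EuclideanSpace ℝ (Fin 2) → ℝ)
    (x : EuclideanSpace ℝ (Fin 2)) : ℝ := ‖fderiv ℝ u x‖ ^ 2

/-- The Laplacian of `u` at `x`, as the trace of the second derivative. -/
noncomputable def lapl (u : EuclideanSpace ℝ (Fin 2) → ℝ)
    (x : EuclideanSpace ℝ (Fin 2)) : ℝ :=
  ∑ i : Fin 2, iteratedFDeriv ℝ 2 u x
    ![EuclideanSpace.single i (1:ℝ), EuclideanSpace.single i (1:ℝ)]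

/-- Membership in `H¹(ℝ²)`. -/
def InH1 (u : EuclideanSpace ℝ (Fin 2) → ℝ) : Prop :=
  MemLp u 2 (volume : Measure (EuclideanSpace ℝ (Fin 2))) ∧
    Integrable (gradNormSq u) (volume : Measure (EuclideanSpace ℝ (Fin 2)))

/-- The auxiliary constrained infimum `𝒪(b₁,b₂,β)` of the quotient
`∫(|∇u₁|²+|∇u₂|²) / ((b₁/2)∫u₁⁴ + (b₂/2)∫u₂⁴ + β∫u₁²u₂²)` over unit-mass pairs. -/
noncomputable def Ofun (b1 b2 β : ℝ) : ℝ :=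
  sInf { r : ℝ | ∃ u1 u2 : EuclideanSpace ℝ (Fin 2) → ℝ,
    InH1 u1 ∧ InH1 u2 ∧ (∫ x, (u1 x)^2) = 1 ∧ (∫ x, (u2 x)^2) = 1 ∧
    r = (∫ x, (gradNormSq u1 x + gradNormSq u2 x)) /
        ((b1/2) * (∫ x, (u1 x)^4) + (b2/2) * (∫ x, (u2 x)^4) +
          β * (∫ x, (u1 x)^2 * (u2 x)^2)) }

/-- The admissible set appearing in the definition of `Ofun`. -/
def OSet (b1 b2 β : ℝ) : Set ℝ :=
  { r : ℝ | ∃ u1 u2 : EuclideanSpace ℝ (Fin 2) → ℝ,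
    InH1 u1 ∧ InH1 u2 ∧ (∫ x, (u1 x)^2) = 1 ∧ (∫ x, (u2 x)^2) = 1 ∧
    r = (∫ x, (gradNormSq u1 x + gradNormSq u2 x)) /
        ((b1/2) * (∫ x, (u1 x)^4) + (b2/2) * (∫ x, (u2 x)^4) +
          β * (∫ x, (u1 x)^2 * (u2 x)^2)) }

lemma Ofun_eq (b1 b2 β : ℝ) : Ofun b1 b2 β = sInf (OSet b1 b2 β) := rfl

lemma OSet_nonneg {b1 b2 β : ℝ} (hb1 : 0 < b1) (hb2 : 0 < b2) (hβ : 0 < β) :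
    ∀ r ∈ OSet b1 b2 β, 0 ≤ r := by
  rintro r ⟨u1, u2, _, _, _, _, rfl⟩
  apply div_nonneg
  · exact integral_nonneg fun x => by simp [gradNormSq]; positivity
  · have h1 : (0:ℝ) ≤ ∫ x, (u1 x)^4 := integral_nonneg fun x => by positivity
    have h2 : (0:ℝ) ≤ ∫ x, (u2 x)^4 := integral_nonneg fun x => by positivity
    have h3 : (0:ℝ) ≤ ∫ x, (u1 x)^2 * (u2 x)^2 := integral_nonneg fun x => by positivity
    positivity

lemma Ofun_nonneg {b1 b2 β : ℝ} (hb1 : 0 < b1) (hb2 : 0 < b2) (hβ : 0 < β) :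
    0 ≤ Ofun b1 b2 β := by
  rw [Ofun_eq]; exact Real.sInf_nonneg (OSet_nonneg hb1 hb2 hβ)

lemma Ofun_le {b1 b2 β r : ℝ} (hb1 : 0 < b1) (hb2 : 0 < b2) (hβ : 0 < β)
    (hr : r ∈ OSet b1 b2 β) : Ofun b1 b2 β ≤ r := by
  rw [Ofun_eq]
  exact csInf_le ⟨0, fun x hx => OSet_nonneg hb1 hb2 hβ x hx⟩ hr

-- One-sided Lipschitz estimate.
set_option maxHeartbeats 2000000 in
lemma key (astar : ℝ)
    (hbound : ∀ b1 b2 β : ℝ, 0 < b1 → 0 < b2 → 0 < β →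
      astar / max (b1 + β) (b2 + β) ≤ Ofun b1 b2 β ∧
        Ofun b1 b2 β ≤ 2 * astar / (b1 + b2 + 2 * β)) :
    ∀ b1 b2 b3 t1 t2 t3 : ℝ, 0 < b1 → 0 < b2 → 0 < b3 → 0 < t1 → 0 < t2 → 0 < t3 →
      Ofun b1 b2 b3 - Ofun t1 t2 t3 ≤
        12 * astar / ((b1 + b2 + 2 * b3) * (t1 + t2 + 2 * t3)) *
          Real.sqrt ((b1 - t1)^2 + (b2 - t2)^2 + (b3 - t3)^2) := by
  intro b1 b2 b3 t1 t2 t3 hb1 hb2 hb3 ht1 ht2 ht3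
  -- first, nonnegativity of astar
  have hO1 := hbound 1 1 1 one_pos one_pos one_pos
  have hOn : (0:ℝ) ≤ Ofun 1 1 1 := Ofun_nonneg one_pos one_pos one_pos
  have ha0 : 0 ≤ astar := by
    have h2 : max ((1:ℝ)+1) (1+1) = 2 := by norm_num
    rw [h2] at hO1
    linarith only [hOn, hO1.2]
  set Sb := b1 + b2 + 2 * b3 with hSb
  set St := t1 + t2 + 2 * t3 with hSt
  have hSbp : 0 < Sb := by positivity
  have hStp : 0 < St := by positivity
  set d := Real.sqrt ((b1 - t1)^2 + (b2 - t2)^2 + (b3 - t3)^2) with hd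
  have hd0 : 0 ≤ d := Real.sqrt_nonneg _
  have hd2 : d ^ 2 = (b1 - t1)^2 + (b2 - t2)^2 + (b3 - t3)^2 := Real.sq_sqrt (by positivity)
  clear_value Sb St d
  rcases eq_or_lt_of_le ha0 with ha | ha
  · -- astar = 0 : Ofun vanishes identically
    have hOb := hbound b1 b2 b3 hb1 hb2 hb3
    have hOt := hbound t1 t2 t3 ht1 ht2 ht3
    rw [← ha] at hOb hOt
    have h1 : Ofun b1 b2 b3 = 0 := le_antisymm (by simpa using hOb.2) (Ofun_nonneg hb1 hb2 hb3)
    have h2 : Ofun t1 t2 t3 = 0 := le_antisymm (by simpa using hOt.2) (Ofun_nonneg ht1 ht2 ht3)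
    rw [h1, h2, ← ha]
    simp
  -- bounds on sums
  have hsum : (St - Sb)^2 ≤ 6 * d^2 := by
    rw [hd2, hSt, hSb]
    nlinarith only [sq_nonneg ((b1-t1) - (b2-t2)), sq_nonneg (2*(b1-t1) - (b3-t3)),
      sq_nonneg (2*(b2-t2) - (b3-t3))]
  have hStSb : St - Sb ≤ (49/20) * d := by
    nlinarith only [hsum, hd0, sq_nonneg (St - Sb)]
  have hSbSt : Sb - St ≤ (49/20) * d := by
    nlinarith only [hsum, hd0, sq_nonneg (St - Sb)]
  -- trivial upper/lower bounds
  have hObu : Ofun b1 b2 b3 ≤ 2 * astar / Sb := by rw [hSb]; exact (hbound b1 b2 b3 hb1 hb2 hb3).2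
  have hOtl : astar / St ≤ Ofun t1 t2 t3 := by
    refine le_trans ?_ (hbound t1 t2 t3 ht1 ht2 ht3).1
    apply div_le_div_of_nonneg_left ha.le (by positivity)
    apply max_le <;> [linarith only [hSt, ht2, ht3]; linarith only [hSt, ht1, ht3]]
  have hOtu : Ofun t1 t2 t3 ≤ 2 * astar / St := by rw [hSt]; exact (hbound t1 t2 t3 ht1 ht2 ht3).2
  rcases le_or_gt St (8 * d) with hcase | hcase
  · -- trivial case
    have key0 : 2 * astar / Sb - astar / St ≤ 12 * astar / (Sb * St) * d := by
      have h12 : 2 * St - Sb ≤ 12 * d := by linarith only [hcase, hStSb, hd0]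
      have hmm : astar * (2 * St - Sb) ≤ astar * (12 * d) :=
        mul_le_mul_of_nonneg_left h12 ha.le
      have heq : 2 * astar / Sb - astar / St = astar * (2 * St - Sb) / (Sb * St) := by
        field_simp
      have heq2 : 12 * astar / (Sb * St) * d = astar * (12 * d) / (Sb * St) := by
        field_simp
      rw [heq, heq2]
      exact div_le_div_of_nonneg_right hmm (by positivity) |>.trans_eq rfl
    linarith only [key0, hObu, hOtl]
  · -- main case : St > 8 d
    rw [sub_le_iff_le_add]
    apply le_of_forall_pos_le_add
    intro ε hε
    -- choose a near-minimizer for the t-parameters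
    set δ := min ε (astar / (100 * St)) with hδdef
    have hδ0 : 0 < δ := lt_min hε (by positivity)
    clear_value δ
    have hne : (OSet t1 t2 t3).Nonempty := by
      by_contra h
      rw [Set.not_nonempty_iff_eq_empty] at h
      have : Ofun t1 t2 t3 = 0 := by rw [Ofun_eq, h, Real.sInf_empty]
      linarith only [this, hOtl, div_pos ha hStp]
    obtain ⟨r, hrmem, hrlt⟩ := Real.lt_sInf_add_pos hne hδ0
    rw [← Ofun_eq] at hrlt
    obtain ⟨u1, u2, hu1, hu2, hm1, hm2, hreq⟩ := hrmem
    set N := ∫ x, (gradNormSq u1 x + gradNormSq u2 x) with hN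
    set A := ∫ x, (u1 x)^4 with hA
    set B := ∫ x, (u2 x)^4 with hB
    set C := ∫ x, (u1 x)^2 * (u2 x)^2 with hC
    have hN0 : 0 ≤ N := integral_nonneg fun x => by simp [gradNormSq]; positivity
    have hA0 : 0 ≤ A := integral_nonneg fun x => by positivity
    have hB0 : 0 ≤ B := integral_nonneg fun x => by positivity
    have hC0 : 0 ≤ C := integral_nonneg fun x => by positivity
    set Dt := t1/2 * A + t2/2 * B + t3 * C with hDt
    set Db := b1/2 * A + b2/2 * B + b3 * C with hDb
    have hrval : r = N / Dt := hreq
    have hOtr : Ofun t1 t2 t3 ≤ r :=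
      Ofun_le ht1 ht2 ht3 ⟨u1, u2, hu1, hu2, hm1, hm2, hreq⟩
    have hOtpos : 0 < Ofun t1 t2 t3 := lt_of_lt_of_le (div_pos ha hStp) hOtl
    have hDt0 : 0 ≤ Dt := by positivity
    have hDtpos : 0 < Dt := by
      rcases eq_or_lt_of_le hDt0 with h | h
      · exfalso
        have : r = 0 := by rw [hrval, ← h, div_zero]
        linarith only [this, hOtr, hOtpos]
      · exact h
    have hNpos : 0 < N := by
      rcases eq_or_lt_of_le hN0 with h | h
      · exfalso
        have : r = 0 := by rw [hrval, ← h, zero_div]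
        linarith only [this, hOtr, hOtpos]
      · exact h
    have hABC : 0 < A + B + C := by
      by_contra h
      push_neg at h
      have hA' : A = 0 := by linarith only [h, hA0, hB0, hC0]
      have hB' : B = 0 := by linarith only [h, hA0, hB0, hC0]
      have hC' : C = 0 := by linarith only [h, hA0, hB0, hC0]
      rw [hDt, hA', hB', hC'] at hDtpos
      simp at hDtpos
    have hDbpos : 0 < Db := by
      rw [hDb]
      rcases lt_trichotomy A 0 with h | h | h
      · linarith only [h, hA0]
      · rcases lt_trichotomy B 0 with h' | h' | h'
        · linarith only [h', hB0]
        · have hCpos : 0 < C := by rw [h, h'] at hABC; linarith only [hABC]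
          have k1 : 0 ≤ b1/2 * A := mul_nonneg (by linarith only [hb1]) hA0
          have k2 : 0 ≤ b2/2 * B := mul_nonneg (by linarith only [hb2]) hB0
          have k3 : 0 < b3 * C := mul_pos hb3 hCpos
          linarith only [k1, k2, k3]
        · have k1 : 0 ≤ b1/2 * A := mul_nonneg (by linarith only [hb1]) hA0
          have k2 : 0 < b2/2 * B := mul_pos (by linarith only [hb2]) h'
          have k3 : 0 ≤ b3 * C := mul_nonneg hb3.le hC0
          linarith only [k1, k2, k3]
      · have k1 : 0 < b1/2 * A := mul_pos (by linarith only [hb1]) h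
        have k2 : 0 ≤ b2/2 * B := mul_nonneg (by linarith only [hb2]) hB0
        have k3 : 0 ≤ b3 * C := mul_nonneg hb3.le hC0
        linarith only [k1, k2, k3]
    -- membership of the same pair for the b-parameters
    have hObX : Ofun b1 b2 b3 ≤ N / Db :=
      Ofun_le hb1 hb2 hb3 ⟨u1, u2, hu1, hu2, hm1, hm2, rfl⟩
    -- the key structural bound coming from hbound applied at |Δ|-parameters
    set m1 := |t1 - b1| with hm1d
    set m2 := |t2 - b2| with hm2d
    set m3 := |t3 - b3| with hm3d
    have hm10 : 0 ≤ m1 := abs_nonneg _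
    have hm20 : 0 ≤ m2 := abs_nonneg _
    have hm30 : 0 ≤ m3 := abs_nonneg _
    have hWkey : astar * (m1/2 * A + m2/2 * B + m3 * C) ≤ N * (max m1 m2 + m3) := by
      apply le_of_forall_pos_le_add
      intro ε' hε'
      set η := ε' / (2 * N) with hη
      have hηpos : 0 < η := by positivity
      have hmem' : N / ((m1+η)/2 * A + (m2+η)/2 * B + (m3+η) * C) ∈
          OSet (m1+η) (m2+η) (m3+η) := ⟨u1, u2, hu1, hu2, hm1, hm2, rfl⟩
      have hp1 : 0 < m1 + η := by linarith only [hm10, hηpos]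
      have hp2 : 0 < m2 + η := by linarith only [hm20, hηpos]
      have hp3 : 0 < m3 + η := by linarith only [hm30, hηpos]
      have hOle := Ofun_le hp1 hp2 hp3 hmem'
      have hlow := (hbound (m1+η) (m2+η) (m3+η) hp1 hp2 hp3).1
      have hD'pos : 0 < (m1+η)/2 * A + (m2+η)/2 * B + (m3+η) * C := by
        rcases lt_trichotomy A 0 with h | h | h
        · linarith only [h, hA0]
        · rcases lt_trichotomy B 0 with h' | h' | h'
          · linarith only [h', hB0]
          · have hCpos : 0 < C := by rw [h, h'] at hABC; linarith only [hABC]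
            have k1 : 0 ≤ (m1+η)/2 * A := mul_nonneg (by linarith only [hp1]) hA0
            have k2 : 0 ≤ (m2+η)/2 * B := mul_nonneg (by linarith only [hp2]) hB0
            have k3 : 0 < (m3+η) * C := mul_pos hp3 hCpos
            linarith only [k1, k2, k3]
          · have k1 : 0 ≤ (m1+η)/2 * A := mul_nonneg (by linarith only [hp1]) hA0
            have k2 : 0 < (m2+η)/2 * B := mul_pos (by linarith only [hp2]) h'
            have k3 : 0 ≤ (m3+η) * C := mul_nonneg hp3.le hC0
            linarith only [k1, k2, k3]
        · have k1 : 0 < (m1+η)/2 * A := mul_pos (by linarith only [hp1]) h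
          have k2 : 0 ≤ (m2+η)/2 * B := mul_nonneg (by linarith only [hp2]) hB0
          have k3 : 0 ≤ (m3+η) * C := mul_nonneg hp3.le hC0
          linarith only [k1, k2, k3]
      have hM'pos : 0 < max (m1 + η + (m3 + η)) (m2 + η + (m3 + η)) :=
        lt_of_lt_of_le (by linarith only [hm10, hm30, hηpos] : (0:ℝ) < m1 + η + (m3 + η)) (le_max_left _ _)
      have hchain : astar / max (m1 + η + (m3 + η)) (m2 + η + (m3 + η)) ≤
          N / ((m1+η)/2 * A + (m2+η)/2 * B + (m3+η) * C) := le_trans hlow hOle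
      rw [div_le_div_iff₀ hM'pos hD'pos] at hchain
      have hM'le : max (m1 + η + (m3 + η)) (m2 + η + (m3 + η)) ≤ max m1 m2 + m3 + 2 * η := by
        apply max_le
        · have := le_max_left m1 m2; linarith only [this, hηpos]
        · have := le_max_right m1 m2; linarith only [this, hηpos]
      have hNM'le : N * max (m1 + η + (m3 + η)) (m2 + η + (m3 + η)) ≤
          N * (max m1 m2 + m3 + 2 * η) := mul_le_mul_of_nonneg_left hM'le hN0
      have h2ηN : N * (2 * η) = ε' := by
        rw [hη]; field_simp
      have hpos' : 0 ≤ astar * (η/2 * A + η/2 * B + η * C) :=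
        mul_nonneg ha.le (by positivity)
      linarith only [hchain, hNM'le, h2ηN, hpos']
    clear_value N A B C Dt Db
    -- bound max m1 m2 + m3 ≤ √2 d
    have hmd : max m1 m2 + m3 ≤ (71/50) * d := by
      have h1 : m1^2 = (b1-t1)^2 := by rw [hm1d, sq_abs]; ring
      have h2 : m2^2 = (b2-t2)^2 := by rw [hm2d, sq_abs]; ring
      have h3 : m3^2 = (b3-t3)^2 := by rw [hm3d, sq_abs]; ring
      rcases max_cases m1 m2 with ⟨hm, _⟩ | ⟨hm, _⟩ <;> rw [hm]
      · nlinarith only [h1, h3, hd2, sq_nonneg (m1 - m3), sq_nonneg (b2 - t2), hd0, hm10, hm30]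
      · nlinarith only [h2, h3, hd2, sq_nonneg (m2 - m3), sq_nonneg (b1 - t1), hd0, hm20, hm30]
    -- perturbation bound
    have hpert : astar * (Dt - Db) ≤ (71/50) * (N * d) := by
      have hle : Dt - Db ≤ m1/2 * A + m2/2 * B + m3 * C := by
        have e1 : t1 - b1 ≤ m1 := le_abs_self _
        have e2 : t2 - b2 ≤ m2 := le_abs_self _
        have e3 : t3 - b3 ≤ m3 := le_abs_self _
        rw [hDt, hDb]
        linarith only [mul_le_mul_of_nonneg_right e1 hA0, mul_le_mul_of_nonneg_right e2 hB0,
          mul_le_mul_of_nonneg_right e3 hC0]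
      have hstep : astar * (Dt - Db) ≤ astar * (m1/2 * A + m2/2 * B + m3 * C) :=
        mul_le_mul_of_nonneg_left hle ha.le
      have hstep3 : N * (max m1 m2 + m3) ≤ N * ((71/50) * d) :=
        mul_le_mul_of_nonneg_left hmd hN0
      linarith only [hstep, hWkey, hstep3]
    -- Y bound : N/Dt < Ot + δ ≤ 2a/St + a/(100 St)
    have hYb : N * St ≤ (201/100) * (astar * Dt) := by
      have hr2 : N / Dt < 2 * astar / St + astar / (100 * St) := by
        have : δ ≤ astar / (100 * St) := by rw [hδdef]; exact min_le_right _ _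
        rw [hrval] at hrlt
        linarith only [this, hrlt, hOtu]
      have hle2 : N / Dt ≤ (201/100) * astar / St := by
        have heq : 2 * astar / St + astar / (100 * St) = (201/100) * astar / St := by
          field_simp; ring
        linarith only [hr2, heq.ge, heq.le]
      rw [div_le_div_iff₀ hDtpos hStp] at hle2
      linarith only [hle2]
    have hADt : (100/201) * (N * St) ≤ astar * Dt := by linarith only [hYb]
    have hd8 : d ≤ St / 8 := by linarith only [hcase]
    have hNd : N * d ≤ (1/8) * (N * St) := by
      have := mul_le_mul_of_nonneg_left hd8 hN0
      linarith only [this]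
    have hADb : (25729/80400) * (N * St) ≤ astar * Db := by linarith only [hpert, hADt, hNd]
    have hP0 : (0:ℝ) ≤ N * St := mul_nonneg hN0 hStp.le
    -- core estimate
    have hcore : N / Db - N / Dt ≤ 12 * astar / (Sb * St) * d := by
      rcases le_or_gt Dt Db with h | h
      · have h1 : N / Db ≤ N / Dt := div_le_div_of_nonneg_left hN0 hDtpos h
        have h2 : (0:ℝ) ≤ 12 * astar / (Sb * St) * d := by positivity
        linarith only [h1, h2]
      · have hdiff : N / Db - N / Dt = N * (Dt - Db) / (Db * Dt) := by
          field_simp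
        rw [hdiff, div_mul_eq_mul_div, div_le_div_iff₀ (by positivity) (by positivity)]
        -- goal : N * (Dt - Db) * (Sb * St) ≤ 12 * astar * d * (Db * Dt)
        have hSbSt' : Sb ≤ (209/160) * St := by linarith only [hSbSt, hd8, hd0]
        have hNSb : N * Sb ≤ (209/160) * (N * St) := by
          have := mul_le_mul_of_nonneg_left hSbSt' hN0
          linarith only [this]
        have h1 : (N * St) * (N * Sb) ≤ (209/160) * ((N * St) * (N * St)) := by
          have := mul_le_mul_of_nonneg_left hNSb hP0
          linarith only [this]
        have h2 : ((25729/80400) * (N * St)) * ((100/201) * (N * St)) ≤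
            (astar * Db) * (astar * Dt) :=
          mul_le_mul hADb hADt (by positivity) (le_trans (by positivity) hADb)
        have hmain : (71/50) * ((N * St) * (N * Sb)) ≤ 12 * ((astar * Db) * (astar * Dt)) := by
          linarith only [h1, h2, mul_nonneg hP0 hP0]
        have hq : astar * (Dt - Db) * (N * (Sb * St)) ≤ (71/50) * (N * d) * (N * (Sb * St)) :=
          mul_le_mul_of_nonneg_right hpert (by positivity)
        have hq2 : (71/50) * ((N * St) * (N * Sb)) * d ≤ 12 * ((astar * Db) * (astar * Dt)) * d :=
          mul_le_mul_of_nonneg_right hmain hd0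
        have hfin : astar * (N * (Dt - Db) * (Sb * St)) ≤ astar * (12 * astar * d * (Db * Dt)) := by
          linarith only [hq, hq2]
        exact le_of_mul_le_mul_left hfin ha
    -- finish
    have hδε : δ ≤ ε := by rw [hδdef]; exact min_le_left _ _
    have : Ofun t1 t2 t3 > N / Dt - δ := by rw [hrval] at hrlt; linarith only [hrlt]
    linarith only [this, hObX, hcore, hδε]

/-- Lipschitz estimate for `𝒪`:
`|𝒪(b₁,b₂,β) - 𝒪(b̃₁,b̃₂,β̃)| ≤ 12a*/((b₁+b₂+2β)(b̃₁+b̃₂+2β̃)) · |(b₁,b₂,β)-(b̃₁,b̃₂,β̃)|`;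
in particular `𝒪` is locally Lipschitz on `(0,∞)³`. -/
theorem stmt5 (Q : EuclideanSpace ℝ (Fin 2) → ℝ) (astar : ℝ)
    (hQpos : ∀ x, 0 < Q x)
    (hQrad : ∀ x y, ‖x‖ = ‖y‖ → Q x = Q y)
    (hQsm : ContDiff ℝ 2 Q) (hQH1 : InH1 Q)
    (hQeq : ∀ x, - lapl Q x + Q x - (Q x)^3 = 0)
    (hQuniq : ∀ Q' : EuclideanSpace ℝ (Fin 2) → ℝ, (∀ x, 0 < Q' x) →
      (∀ x y, ‖x‖ = ‖y‖ → Q' x = Q' y) → ContDiff ℝ 2 Q' → InH1 Q' →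
      (∀ x, - lapl Q' x + Q' x - (Q' x)^3 = 0) → Q' = Q)
    (hastar : astar = ∫ x, (Q x)^2)
    (hGN : ∀ u : EuclideanSpace ℝ (Fin 2) → ℝ, InH1 u →
      (∫ x, (u x)^4) ≤ (2/astar) * (∫ x, gradNormSq u x) * (∫ x, (u x)^2))
    (hbound : ∀ b1 b2 β : ℝ, 0 < b1 → 0 < b2 → 0 < β →
      astar / max (b1 + β) (b2 + β) ≤ Ofun b1 b2 β ∧
        Ofun b1 b2 β ≤ 2 * astar / (b1 + b2 + 2 * β)) :
    ∀ b1 b2 β tb1 tb2 tβ : ℝ, 0 < b1 → 0 < b2 → 0 < β → 0 < tb1 → 0 < tb2 → 0 < tβ →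
      |Ofun b1 b2 β - Ofun tb1 tb2 tβ| ≤
        12 * astar / ((b1 + b2 + 2 * β) * (tb1 + tb2 + 2 * tβ)) *
          Real.sqrt ((b1 - tb1)^2 + (b2 - tb2)^2 + (β - tβ)^2) := by
  intro b1 b2 β t1 t2 t3 hb1 hb2 hb3 ht1 ht2 ht3
  rw [abs_sub_le_iff]
  constructor
  · exact key astar hbound b1 b2 β t1 t2 t3 hb1 hb2 hb3 ht1 ht2 ht3
  · have h := key astar hbound t1 t2 t3 b1 b2 β ht1 ht2 ht3 hb1 hb2 hb3
    have e1 : (t1 - b1)^2 + (t2 - b2)^2 + (t3 - β)^2 = (b1 - t1)^2 + (b2 - t2)^2 + (β - t3)^2 := by ring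
    have e2 : (t1 + t2 + 2 * t3) * (b1 + b2 + 2 * β) = (b1 + b2 + 2 * β) * (t1 + t2 + 2 * t3) := by ring
    rw [e1, e2] at h
    exact h
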